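/- arXiv:1509.03648 — 2 statements merged into one kernel-verified Lean document; each statement's English description precedes it below -/
import Mathlib

section
/- Let g ≥ 3 and define dJ(g; k_1, ..., k_ρ) = (g!/(g-ρ-1)!) · (∏_{i=1}^{ρ} k_i) · ( Σ_{j=0}^{ρ-1} ((-1)^j/(g-ρ+j)) · Σ_{I ⊆ {1,...,ρ}, |I|=j} ∏_{i∉I} k_i + (-1)^ρ/g ). Then for the signature consisting of g-2 entries all equal to 2, one has dJ(g-1; 2, 2, ..., 2) = (g-2)! · 2^{g-2} · (2^{g-1} - 1). -/
/-- The de Jonquières number, given by the explicit closed formula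
`dJ(g; k_1,...,k_ρ) = (g!/(g-ρ-1)!) · (∏ k_i) ·
  ( Σ_{j=0}^{ρ-1} ((-1)^j/(g-ρ+j)) Σ_{|I|=j} ∏_{i∉I} k_i + (-1)^ρ/g )`. -/
noncomputable def dJ (g : ℕ) {ρ : ℕ} (k : Fin ρ → ℚ) : ℚ :=
  ((Nat.factorial g : ℚ) / (Nat.factorial (g - ρ - 1) : ℚ)) * (∏ i, k i) *
    ((∑ j ∈ Finset.range ρ, ((-1 : ℚ) ^ j / ((g : ℚ) - ρ + j)) *
        ∑ I ∈ Finset.powersetCard j (Finset.univ : Finset (Fin ρ)), ∏ i ∈ Iᶜ, k i) +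
      (-1 : ℚ) ^ ρ / (g : ℚ))

lemma pc_sum (n j : ℕ) :
    ∑ I ∈ Finset.powersetCard j (Finset.univ : Finset (Fin n)), (2:ℚ) ^ (Iᶜ.card)
      = (n.choose j : ℚ) * 2 ^ (n - j) := by
  have : ∀ I ∈ Finset.powersetCard j (Finset.univ : Finset (Fin n)),
      (2:ℚ) ^ (Iᶜ.card) = 2 ^ (n - j) := by
    intro I hI
    rw [Finset.mem_powersetCard] at hI
    rw [Finset.card_compl, hI.2, Fintype.card_fin]
  rw [Finset.sum_congr rfl this, Finset.sum_const, Finset.card_powersetCard,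
    Finset.card_univ, Fintype.card_fin, nsmul_eq_mul]

lemma key (n : ℕ) :
    ∑ j ∈ Finset.range (n+1), (-1:ℚ)^j * ((n+1).choose (j+1)) * 2^(n-j) = 2^(n+1) - 1 := by
  have h : ((-1:ℚ) + 2)^(n+1) = ∑ m ∈ Finset.range (n+2), (-1:ℚ)^m * 2^(n+1-m) * ((n+1).choose m) :=
    add_pow (-1 : ℚ) 2 (n+1)
  rw [Finset.sum_range_succ'] at h
  simp only [Nat.choose_zero_right, pow_zero, Nat.sub_zero, Nat.cast_one, mul_one, one_mul] at h
  have h2 : ((-1:ℚ) + 2) ^ (n+1) = 1 := by norm_num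
  rw [h2] at h
  have : ∑ j ∈ Finset.range (n+1), (-1:ℚ)^j * ((n+1).choose (j+1)) * 2^(n-j)
      = -∑ i ∈ Finset.range (n+1), (-1:ℚ)^(i+1) * 2^(n+1-(i+1)) * ((n+1).choose (i+1)) := by
    rw [← Finset.sum_neg_distrib]
    apply Finset.sum_congr rfl
    intro j hj
    have : n + 1 - (j + 1) = n - j := by omega
    rw [this]; ring
  rw [this]
  linarith [h]

theorem dJ_all_twos' (n : ℕ) :
    dJ (n + 2) (fun _ : Fin (n + 1) => (2 : ℚ)) =
      (Nat.factorial (n + 1) : ℚ) * 2 ^ (n + 1) * (2 ^ (n + 2) - 1) := by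
  unfold dJ
  have hfac0 : n + 2 - (n + 1) - 1 = 0 := by omega
  rw [hfac0]
  simp only [Nat.factorial_zero, Nat.cast_one, div_one, Finset.prod_const, Finset.card_univ,
    Fintype.card_fin]
  have hsum : ∀ j ∈ Finset.range (n+1),
      ((-1 : ℚ) ^ j / ((↑(n+2) : ℚ) - ↑(n+1) + ↑j)) *
        ∑ I ∈ Finset.powersetCard j (Finset.univ : Finset (Fin (n+1))), (2:ℚ) ^ (Iᶜ.card)
      = (-1:ℚ)^j * ((n+2).choose (j+1)) * 2^(n+1-j) / (↑(n+2) : ℚ) := by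
    intro j hj
    rw [pc_sum]
    have hcN : (n+1).choose j * (n + 2) = (n+2).choose (j+1) * (j + 1) := by
      rw [mul_comm]
      simpa [Nat.succ_eq_add_one] using Nat.add_one_mul_choose_eq (n+1) j
    have hc : ((n+1).choose j : ℚ) * ((n:ℚ) + 2) = ((n+2).choose (j+1) : ℚ) * ((j:ℚ) + 1) := by
      exact_mod_cast hcN
    push_cast
    have hj1 : ((n:ℚ) + 2) - (n + 1) + j = j + 1 := by ring
    rw [hj1]
    have hjp : (0:ℚ) < (j:ℚ) + 1 := by positivity
    have hnp : (0:ℚ) < (n:ℚ) + 2 := by positivity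
    rw [div_mul_eq_mul_div, div_eq_div_iff hjp.ne' hnp.ne']
    linear_combination ((-1:ℚ)^j * 2^(n+1-j)) * hc
  rw [Finset.sum_congr rfl hsum]
  have hK := key (n+1)
  rw [Finset.sum_range_succ] at hK
  simp only [Nat.choose_self, Nat.cast_one, mul_one, Nat.sub_self, pow_zero] at hK
  rw [← Finset.sum_div]
  have hfact : ((n+2).factorial : ℚ) = ((n:ℚ)+2) * ((n+1).factorial : ℚ) := by
    rw [show n+2 = (n+1)+1 from rfl, Nat.factorial_succ]
    push_cast; ring
  have hcast : ((↑(n+2) : ℚ)) = (n:ℚ) + 2 := by push_cast; ring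
  rw [hcast, ← add_div, hfact]
  have hS : (∑ j ∈ Finset.range (n+1), (-1:ℚ)^j * ((n+2).choose (j+1)) * 2^(n+1-j))
      + (-1:ℚ)^(n+1) = 2^(n+2) - 1 := by linarith [hK]
  rw [hS]
  have hnp : ((n:ℚ) + 2) ≠ 0 := by positivity
  field_simp

/-- For `g ≥ 3`, `dJ(g-1; 2,...,2)` (with `g-2` twos) equals `(g-2)!·2^{g-2}·(2^{g-1}-1)`. -/
theorem dJ_all_twos (g : ℕ) (hg : 3 ≤ g) :
    dJ (g - 1) (fun _ : Fin (g - 2) => (2 : ℚ)) =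
      (Nat.factorial (g - 2) : ℚ) * 2 ^ (g - 2) * (2 ^ (g - 1) - 1) := by
  obtain ⟨n, rfl⟩ : ∃ n, g = n + 3 := ⟨g - 3, by omega⟩
  exact dJ_all_twos' n
end

section
/- Let g ≥ 4 and define dJ(g; k_1, ..., k_ρ) by the explicit de Jonquières formula dJ(g; k_1,...,k_ρ) = (g!/(g-ρ-1)!) · (∏ k_i) · ( Σ_{j=0}^{ρ-1} ((-1)^j/(g-ρ+j)) Σ_{|I|=j} ∏_{i∉I} k_i + (-1)^ρ/g ). Then for the signature (1, 2, 2, ..., 2) with g-3 twos, one has dJ(g-1; 1, 2^{g-3}) = (g-3)! · 2^{g-3} · ((g-3)·2^{g-2} + 1). -/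
open Finset

/-- Binomial sum: `Σ_{j=0}^{n} (-1)^j 2^{n-j} C(n+1,j+1) = 2^{n+1} - 1`. -/
lemma dJaux_B1 (n : ℕ) :
    ∑ j ∈ range (n + 1), (-1 : ℚ) ^ j * 2 ^ (n - j) * ((n + 1).choose (j + 1) : ℚ)
      = 2 ^ (n + 1) - 1 := by
  have h := add_pow (-1 : ℚ) 2 (n + 1)
  rw [Finset.sum_range_succ' (fun k => (-1 : ℚ) ^ k * 2 ^ (n + 1 - k) * ((n+1).choose k : ℚ)) (n+1)] at h
  simp only [Nat.succ_sub_succ] at h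
  norm_num at h
  have : ∑ j ∈ range (n + 1), (-1:ℚ) ^ (j+1) * 2 ^ (n - j) * ((n + 1).choose (j + 1) : ℚ)
      = - ∑ j ∈ range (n + 1), (-1:ℚ) ^ j * 2 ^ (n - j) * ((n + 1).choose (j + 1) : ℚ) := by
    rw [← Finset.sum_neg_distrib]
    exact Finset.sum_congr rfl (fun j _ => by ring)
  rw [this] at h
  linarith

/-- Binomial sum: `Σ_{j=0}^{n} (-1)^j 2^{n-j} C(n+2,j+2) = 1 - 2^{n+2} + (n+2)2^{n+1}`. -/
lemma dJaux_B2 (n : ℕ) :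
    ∑ j ∈ range (n + 1), (-1 : ℚ) ^ j * 2 ^ (n - j) * ((n + 2).choose (j + 2) : ℚ)
      = 1 - 2 ^ (n + 2) + (n + 2) * 2 ^ (n + 1) := by
  have h := add_pow (-1 : ℚ) 2 (n + 2)
  rw [Finset.sum_range_succ' (fun k => (-1 : ℚ) ^ k * 2 ^ (n + 2 - k) * ((n+2).choose k : ℚ)) (n+2),
      Finset.sum_range_succ' (fun k => (-1 : ℚ) ^ (k+1) * 2 ^ (n + 2 - (k+1)) * ((n+2).choose (k+1) : ℚ)) (n+1)] at h
  simp only [Nat.succ_sub_succ] at h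
  norm_num at h
  have : ∑ j ∈ range (n + 1), (-1:ℚ) ^ (j+2) * 2 ^ (n - j) * ((n + 2).choose (j + 2) : ℚ)
      = ∑ j ∈ range (n + 1), (-1:ℚ) ^ j * 2 ^ (n - j) * ((n + 2).choose (j + 2) : ℚ) :=
    Finset.sum_congr rfl (fun j _ => by ring)
  rw [this] at h
  linarith

lemma dJaux_L1 (n : ℕ) :
    ∑ j ∈ range (n + 1), (-1 : ℚ) ^ j * 2 ^ (n - j) * ((n.choose j : ℚ) / (j + 1))
      = (2 ^ (n + 1) - 1) / (n + 1) := by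
  have key : ∀ j : ℕ, (n.choose j : ℚ) / (j + 1) = ((n + 1).choose (j + 1) : ℚ) / (n + 1) := by
    intro j
    have h : ((n + 1 : ℕ) : ℚ) * (n.choose j : ℚ) = ((n + 1).choose (j + 1) : ℚ) * ((j + 1 : ℕ) : ℚ) := by
      exact_mod_cast congrArg (Nat.cast : ℕ → ℚ) (Nat.add_one_mul_choose_eq n j)
    push_cast at h
    have h1 : ((j : ℚ) + 1) ≠ 0 := by positivity
    have h2 : ((n : ℚ) + 1) ≠ 0 := by positivity
    field_simp
    linarith [h]
  have : ∀ j ∈ range (n+1), (-1 : ℚ) ^ j * 2 ^ (n - j) * ((n.choose j : ℚ) / (j + 1))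
      = ((-1 : ℚ) ^ j * 2 ^ (n - j) * ((n + 1).choose (j + 1) : ℚ)) * (1 / (n+1)) := by
    intro j _; rw [key]; ring
  rw [Finset.sum_congr rfl this, ← Finset.sum_mul, dJaux_B1]
  ring

lemma dJaux_L2 (n : ℕ) :
    ∑ j ∈ range (n + 1), (-1 : ℚ) ^ j * 2 ^ (n - j) * ((n.choose j : ℚ) / (j + 2))
      = (2 ^ (n + 2) - n - 3) / ((n + 1) * (n + 2)) := by
  have key : ∀ j : ℕ, (n.choose j : ℚ) / (j + 2)
      = (((n + 1).choose (j + 1) : ℚ) * (n + 2) - ((n + 2).choose (j + 2) : ℚ)) / ((n + 1) * (n + 2)) := by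
    intro j
    have h1 : ((n + 1 : ℕ) : ℚ) * (n.choose j : ℚ) = ((n + 1).choose (j + 1) : ℚ) * ((j + 1 : ℕ) : ℚ) := by
      exact_mod_cast congrArg (Nat.cast : ℕ → ℚ) (Nat.add_one_mul_choose_eq n j)
    have h2 : ((n + 2 : ℕ) : ℚ) * ((n+1).choose (j+1) : ℚ) = ((n + 2).choose (j + 2) : ℚ) * ((j + 2 : ℕ) : ℚ) := by
      exact_mod_cast congrArg (Nat.cast : ℕ → ℚ) (Nat.add_one_mul_choose_eq (n+1) (j+1))
    push_cast at h1 h2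
    have d1 : ((j : ℚ) + 2) ≠ 0 := by positivity
    have d2 : ((n : ℚ) + 1) ≠ 0 := by positivity
    have d3 : ((n : ℚ) + 2) ≠ 0 := by positivity
    field_simp
    nlinarith [h1, h2]
  have : ∀ j ∈ range (n+1), (-1 : ℚ) ^ j * 2 ^ (n - j) * ((n.choose j : ℚ) / (j + 2))
      = ((-1 : ℚ) ^ j * 2 ^ (n - j) * ((n+1).choose (j+1) : ℚ)) * ((n+2) / ((n+1)*(n+2)))
        + ((-1 : ℚ) ^ j * 2 ^ (n - j) * ((n+2).choose (j+2) : ℚ)) * (-1 / ((n+1)*(n+2))) := by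
    intro j _; rw [key]; ring
  rw [Finset.sum_congr rfl this, Finset.sum_add_distrib, ← Finset.sum_mul, ← Finset.sum_mul,
    dJaux_B1, dJaux_B2]
  have d2 : ((n : ℚ) + 1) ≠ 0 := by positivity
  have d3 : ((n : ℚ) + 2) ≠ 0 := by positivity
  field_simp
  ring

/-- The key scalar identity behind the de Jonquières computation. -/
lemma dJaux_bracket (n : ℕ) :
    (∑ j ∈ range (n + 1), ((-1 : ℚ) ^ j / (j + 1)) *
        ((n.choose j : ℚ) * 2 ^ (n - j) + (((n+1).choose j - n.choose j : ℕ) : ℚ) * 2 ^ (n + 1 - j)))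
      + (-1 : ℚ) ^ (n + 1) / (n + 2)
      = ((n : ℚ) * 2 ^ (n + 1) + 1) / ((n + 1) * (n + 2)) := by
  have split : ∀ j ∈ range (n+1), ((-1 : ℚ) ^ j / (j + 1)) *
        ((n.choose j : ℚ) * 2 ^ (n - j) + (((n+1).choose j - n.choose j : ℕ) : ℚ) * 2 ^ (n + 1 - j))
      = (-1 : ℚ) ^ j * 2 ^ (n - j) * ((n.choose j : ℚ) / (j + 1))
        + ((-1 : ℚ) ^ j / (j + 1)) * ((((n+1).choose j - n.choose j : ℕ) : ℚ) * 2 ^ (n + 1 - j)) := by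
    intro j _; ring
  rw [Finset.sum_congr rfl split, Finset.sum_add_distrib, dJaux_L1]
  have mid : ∑ j ∈ range (n + 1), ((-1 : ℚ) ^ j / (j + 1)) *
        ((((n+1).choose j - n.choose j : ℕ) : ℚ) * 2 ^ (n + 1 - j))
      = ∑ t ∈ range n, (-((-1 : ℚ) ^ t * 2 ^ (n - t) * ((n.choose t : ℚ) / (t + 2)))) := by
    rw [Finset.sum_range_succ' (fun j => ((-1 : ℚ) ^ j / (j + 1)) *
        ((((n+1).choose j - n.choose j : ℕ) : ℚ) * 2 ^ (n + 1 - j))) n]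
    have h0 : (n+1).choose 0 - n.choose 0 = 0 := by simp
    rw [h0]
    simp only [Nat.cast_zero, zero_mul, mul_zero, add_zero]
    refine Finset.sum_congr rfl (fun t ht => ?_)
    have hp : (n+1).choose (t+1) - n.choose (t+1) = n.choose t := by
      rw [Nat.choose_succ_succ']; omega
    rw [hp]
    have hsub : n + 1 - (t + 1) = n - t := by omega
    rw [hsub]
    push_cast
    ring
  rw [mid]
  have ext : ∑ t ∈ range n, (-((-1 : ℚ) ^ t * 2 ^ (n - t) * ((n.choose t : ℚ) / (t + 2))))
      + (-1 : ℚ) ^ (n + 1) / (n + 2)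
      = - ∑ t ∈ range (n+1), (-1 : ℚ) ^ t * 2 ^ (n - t) * ((n.choose t : ℚ) / (t + 2)) := by
    rw [Finset.sum_range_succ, Nat.sub_self, Nat.choose_self, neg_add,
      ← Finset.sum_neg_distrib]
    push_cast
    congr 1
    ring
  rw [add_assoc, ext, dJaux_L2]
  have d2 : ((n : ℚ) + 1) ≠ 0 := by positivity
  have d3 : ((n : ℚ) + 2) ≠ 0 := by positivity
  field_simp
  ring

lemma dJaux_prod_compl (n j : ℕ) (hj : j ≤ n) (I : Finset (Fin (n+1)))
    (hI : I ∈ powersetCard j (univ : Finset (Fin (n+1)))) :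
    (∏ i ∈ Iᶜ, (if (i : ℕ) = 0 then (1 : ℚ) else 2))
      = if (0 : Fin (n+1)) ∈ I then 2 ^ (n + 1 - j) else 2 ^ (n - j) := by
  have hcard : I.card = j := (Finset.mem_powersetCard.mp hI).2
  have hcc : Iᶜ.card = n + 1 - j := by
    rw [Finset.card_compl, hcard, Fintype.card_fin]
  have hbody : ∀ i : Fin (n+1), (if (i : ℕ) = 0 then (1 : ℚ) else 2)
      = 2 * (if i = (0 : Fin (n+1)) then (1/2 : ℚ) else 1) := by
    intro i
    by_cases h : i = 0
    · simp [h]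
    · have : (i : ℕ) ≠ 0 := by intro h'; apply h; ext; simpa using h'
      simp [h, this]
  rw [Finset.prod_congr rfl (fun i _ => hbody i), Finset.prod_mul_distrib,
    Finset.prod_const, Finset.prod_ite_eq', hcc]
  by_cases h0 : (0 : Fin (n+1)) ∈ I
  · simp [h0, Finset.mem_compl]
  · have hn : n + 1 - j = (n - j) + 1 := by omega
    simp only [Finset.mem_compl, h0, if_true, if_false, not_false_iff]
    rw [hn]
    ring

lemma dJaux_sum_powersetCard (n j : ℕ) (hj : j ≤ n) :
    ∑ I ∈ powersetCard j (univ : Finset (Fin (n+1))),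
        ∏ i ∈ Iᶜ, (if (i : ℕ) = 0 then (1 : ℚ) else 2)
      = (n.choose j : ℚ) * 2 ^ (n - j)
        + (((n+1).choose j - n.choose j : ℕ) : ℚ) * 2 ^ (n + 1 - j) := by
  rw [Finset.sum_congr rfl (fun I hI => dJaux_prod_compl n j hj I hI), Finset.sum_ite,
    Finset.sum_const, Finset.sum_const, nsmul_eq_mul, nsmul_eq_mul]
  have hneg : (powersetCard j (univ : Finset (Fin (n+1)))).filter (fun I => ¬ (0 : Fin (n+1)) ∈ I)
      = powersetCard j ((univ : Finset (Fin (n+1))).erase 0) := by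
    ext I
    simp only [Finset.mem_filter, Finset.mem_powersetCard, Finset.subset_erase,
      Finset.subset_univ, true_and]
    tauto
  have hcardneg : ((powersetCard j (univ : Finset (Fin (n+1)))).filter
      (fun I => ¬ (0 : Fin (n+1)) ∈ I)).card = n.choose j := by
    rw [hneg, Finset.card_powersetCard, Finset.card_erase_of_mem (Finset.mem_univ _),
      Finset.card_univ, Fintype.card_fin, Nat.add_sub_cancel]
  have htot := Finset.card_filter_add_card_filter_not
    (s := powersetCard j (univ : Finset (Fin (n+1)))) (fun I => (0 : Fin (n+1)) ∈ I)
  rw [Finset.card_powersetCard, Finset.card_univ, Fintype.card_fin] at htot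
  have hcardpos : ((powersetCard j (univ : Finset (Fin (n+1)))).filter
      (fun I => (0 : Fin (n+1)) ∈ I)).card = (n+1).choose j - n.choose j := by
    omega
  rw [hcardpos, hcardneg]
  ring

/-- For `g ≥ 4`, `dJ(g-1; 1, 2^{g-3})` (one `1` and `g-3` twos) equals
`(g-3)!·2^{g-3}·((g-3)·2^{g-2}+1)`. -/
theorem dJ_one_and_twos (g : ℕ) (hg : 4 ≤ g) :
    dJ (g - 1) (fun i : Fin (g - 2) => if (i : ℕ) = 0 then (1 : ℚ) else 2) =
      (Nat.factorial (g - 3) : ℚ) * 2 ^ (g - 3) * (((g : ℚ) - 3) * 2 ^ (g - 2) + 1) := by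
  obtain ⟨m, rfl⟩ : ∃ m, g = m + 4 := ⟨g - 4, by omega⟩
  show dJ (m + 3) (fun i : Fin ((m + 1) + 1) => if (i : ℕ) = 0 then (1 : ℚ) else 2)
      = (Nat.factorial (m + 1) : ℚ) * 2 ^ (m + 1) *
          ((((m + 4 : ℕ) : ℚ) - 3) * 2 ^ (m + 2) + 1)
  rw [dJ]
  have hfac0 : m + 3 - ((m + 1) + 1) - 1 = 0 := by omega
  rw [hfac0]
  have hprod : (∏ i : Fin ((m + 1) + 1), (if (i : ℕ) = 0 then (1 : ℚ) else 2)) = 2 ^ (m + 1) := by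
    have h := dJaux_prod_compl (m + 1) 0 (Nat.zero_le _) ∅ (by simp)
    simpa using h
  rw [hprod]
  have hterm : ∀ j ∈ range ((m + 1) + 1),
      ((-1 : ℚ) ^ j / (((m + 3 : ℕ) : ℚ) - (((m + 1) + 1 : ℕ) : ℚ) + j)) *
        (∑ I ∈ powersetCard j (univ : Finset (Fin ((m + 1) + 1))),
          ∏ i ∈ Iᶜ, (if (i : ℕ) = 0 then (1 : ℚ) else 2))
      = ((-1 : ℚ) ^ j / (j + 1)) *
          (((m + 1).choose j : ℚ) * 2 ^ ((m + 1) - j)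
            + ((((m + 1) + 1).choose j - (m + 1).choose j : ℕ) : ℚ) * 2 ^ ((m + 1) + 1 - j)) := by
    intro j hj
    have hjle : j ≤ m + 1 := by have := Finset.mem_range.mp hj; omega
    rw [dJaux_sum_powersetCard (m + 1) j hjle]
    have hden : ((m + 3 : ℕ) : ℚ) - (((m + 1) + 1 : ℕ) : ℚ) + j = (j : ℚ) + 1 := by
      push_cast; ring
    rw [hden]
  rw [Finset.sum_congr rfl hterm]
  have htr : ((m + 3 : ℕ) : ℚ) = ((m + 1 : ℕ) : ℚ) + 2 := by push_cast; ring
  rw [htr, dJaux_bracket (m + 1)]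
  have hfac : ((m + 3).factorial : ℚ) = ((m + 1).factorial : ℚ) * ((m + 2) * (m + 3)) := by
    have h : (m + 3).factorial = (m + 1).factorial * ((m + 2) * (m + 3)) := by
      rw [show m + 3 = (m + 2) + 1 from rfl, Nat.factorial_succ,
        show m + 2 = (m + 1) + 1 from rfl, Nat.factorial_succ]
      ring
    exact_mod_cast congrArg (Nat.cast : ℕ → ℚ) h
  rw [hfac]
  have d2 : ((m : ℚ) + 2) ≠ 0 := by positivity
  have d3 : ((m : ℚ) + 3) ≠ 0 := by positivity
  push_cast
  field_simp
  ring
end
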